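/- Let p be a prime and a a positive integer, let A be the adjacency matrix of the modified divisor prime graph G*_Dp(p^a), and let μ = 1/(a+1). If B is a positive semidefinite real matrix with B² = (A − μI)², then the diagonal entry of B at the vertex 1 equals (2a² + 3a)/((a+1)√(4a+1)). -/

import Mathlib

/-!
The divisors of `p ^ a` other than `1` pairwise share the factor `p`, so the graph is the star
`K_{1,a}` centred at `1` with a loop at the centre. Its adjacency matrix is `l P + m Q`, where
`l, m = (1 ± √(4a+1)) / 2` are the roots of `x² = x + a` and `P`, `Q` are the orthogonal
projections onto the eigenvectors `(l, 1, …, 1)` and `(m, 1, …, 1)`. Thus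
`A - μ = (l - μ) P + (m - μ) Q - μ (1 - P - Q)`, and by uniqueness of positive square roots
`B = |l - μ| P + |m - μ| Q + μ (1 - P - Q)`. The vertex `1` lies in the range of `P + Q`, so
`B 1 1 = ((l - μ) l + (m - μ) m) / (l - m) = (2a + 1 - μ) / √(4a + 1)`.
-/

open Matrix
open scoped MatrixOrder

section OrthogonalProjections

variable {A : Type*} [Ring A] {P Q : A}

theorem IsStarProjection.mul_eq_zero_comm [StarRing A] (hP : IsStarProjection P)
    (hQ : IsStarProjection Q) (hPQ : P * Q = 0) : Q * P = 0 := by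
  simpa [hP.isSelfAdjoint.star_eq, hQ.isSelfAdjoint.star_eq] using congrArg star hPQ

variable [Algebra ℝ A]

theorem sq_smul_add_smul_add_smul_one_sub (hP : IsIdempotentElem P) (hQ : IsIdempotentElem Q)
    (hPQ : P * Q = 0) (hQP : Q * P = 0) (α β γ : ℝ) :
    (α • P + β • Q + γ • (1 - P - Q)) ^ 2 = α ^ 2 • P + β ^ 2 • Q + γ ^ 2 • (1 - P - Q) := by
  simp only [sq, add_mul, mul_add, sub_mul, mul_sub, smul_mul_smul_comm, one_mul, mul_one,
    hP.eq, hQ.eq, hPQ, hQP]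
  module

variable [StarRing A] [PartialOrder A] [StarOrderedRing A] [StarModule ℝ A]

theorem IsStarProjection.smul_add_smul_add_smul_one_sub_nonneg (hP : IsStarProjection P)
    (hQ : IsStarProjection Q) (hPQ : P * Q = 0) {α β γ : ℝ} (hα : 0 ≤ α) (hβ : 0 ≤ β)
    (hγ : 0 ≤ γ) : 0 ≤ α • P + β • Q + γ • (1 - P - Q) := by
  have hR : 0 ≤ 1 - P - Q := by simpa only [sub_sub] using (hP.add hQ hPQ).one_sub_nonneg
  exact add_nonneg (add_nonneg (smul_nonneg hα hP.nonneg) (smul_nonneg hβ hQ.nonneg))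
    (smul_nonneg hγ hR)

theorem IsStarProjection.eq_abs_smul_add_smul_add_smul_one_sub [TopologicalSpace A]
    [ContinuousFunctionalCalculus ℝ A IsSelfAdjoint] [NonnegSpectrumClass ℝ A]
    [IsSemitopologicalRing A] [T2Space A] {B : A}
    (hP : IsStarProjection P) (hQ : IsStarProjection Q) (hPQ : P * Q = 0) {α β γ : ℝ}
    (hB : 0 ≤ B) (hBsq : B ^ 2 = (α • P + β • Q + γ • (1 - P - Q)) ^ 2) :
    B = |α| • P + |β| • Q + |γ| • (1 - P - Q) := by
  have hQP := hP.mul_eq_zero_comm hQ hPQ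
  refine (CFC.sq_eq_sq_iff B _ hB
    (hP.smul_add_smul_add_smul_one_sub_nonneg hQ hPQ (abs_nonneg α) (abs_nonneg β)
      (abs_nonneg γ))).mp ?_
  rw [hBsq, sq_smul_add_smul_add_smul_one_sub hP.isIdempotentElem hQ.isIdempotentElem hPQ hQP,
    sq_smul_add_smul_add_smul_one_sub hP.isIdempotentElem hQ.isIdempotentElem hPQ hQP,
    sq_abs, sq_abs, sq_abs]

end OrthogonalProjections

section RankOneProjection

variable {ι : Type*} [Fintype ι] {v w : ι → ℝ}

noncomputable def rankOneProj (w : ι → ℝ) : Matrix ι ι ℝ := (w ⬝ᵥ w)⁻¹ • vecMulVec w w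

theorem rankOneProj_apply (w : ι → ℝ) (i j : ι) :
    rankOneProj w i j = w i * w j / (w ⬝ᵥ w) := by
  simp [rankOneProj, vecMulVec_apply, div_eq_inv_mul]

theorem isStarProjection_rankOneProj (hw : w ⬝ᵥ w ≠ 0) : IsStarProjection (rankOneProj w) where
  isIdempotentElem := by
    rw [IsIdempotentElem, rankOneProj, smul_mul_smul_comm, vecMulVec_mul_vecMulVec,
      vecMulVec_smul, smul_smul, mul_assoc, inv_mul_cancel₀ hw, mul_one]
  isSelfAdjoint := by
    simp [IsSelfAdjoint, rankOneProj, star_eq_conjTranspose]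

theorem rankOneProj_mul_rankOneProj_of_dotProduct_eq_zero (h : v ⬝ᵥ w = 0) :
    rankOneProj v * rankOneProj w = 0 := by
  simp [rankOneProj, smul_mul_smul_comm, vecMulVec_mul_vecMulVec, h]

end RankOneProjection

section LoopedStar

variable {ι : Type*} [Fintype ι] [DecidableEq ι] (c : ι)

def loopedStarAdj : Matrix ι ι ℝ := of fun u v => if u = c ∨ v = c then 1 else 0

def loopedStarEigenvec (l : ℝ) : ι → ℝ := fun d => if d = c then l else 1

theorem loopedStarEigenvec_dotProduct (l m : ℝ) :
    loopedStarEigenvec c l ⬝ᵥ loopedStarEigenvec c m = l * m + (Fintype.card ι - 1) := by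
  have hcompl : ∀ d ∈ ({c}ᶜ : Finset ι),
      loopedStarEigenvec c l d * loopedStarEigenvec c m d = 1 := by
    intro d hd
    simp [loopedStarEigenvec, show d ≠ c by simpa using hd]
  rw [dotProduct, Fintype.sum_eq_add_sum_compl c, Finset.sum_congr rfl hcompl]
  simp only [loopedStarEigenvec, if_pos, Finset.sum_const, Finset.card_compl,
    Finset.card_singleton, nsmul_eq_mul, mul_one]
  rw [Nat.cast_pred (Fintype.card_pos_iff.mpr ⟨c⟩)]

variable {c} {l m : ℝ}

theorem loopedStarAdj_eq (hcard : 1 < Fintype.card ι) (hsum : l + m = 1)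
    (hprod : l * m = 1 - Fintype.card ι) :
    loopedStarAdj c = l • rankOneProj (loopedStarEigenvec c l) +
      m • rankOneProj (loopedStarEigenvec c m) := by
  have hcard' : (1 : ℝ) < Fintype.card ι := by exact_mod_cast hcard
  have hl : l ≠ 0 := by rintro rfl; linarith
  have hm : m ≠ 0 := by rintro rfl; linarith
  have hlm : l - m ≠ 0 := by intro h; nlinarith
  have hnl : loopedStarEigenvec c l ⬝ᵥ loopedStarEigenvec c l = l * (l - m) := by
    rw [loopedStarEigenvec_dotProduct]; linear_combination hprod
  have hnm : loopedStarEigenvec c m ⬝ᵥ loopedStarEigenvec c m = m * (m - l) := by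
    rw [loopedStarEigenvec_dotProduct]; linear_combination hprod
  ext u v
  simp only [Matrix.add_apply, Matrix.smul_apply, smul_eq_mul, rankOneProj_apply, hnl, hnm]
  have hml : m - l ≠ 0 := sub_ne_zero.mpr (sub_ne_zero.mp hlm).symm
  by_cases hu : u = c <;> by_cases hv : v = c <;>
    simp only [loopedStarAdj, loopedStarEigenvec, of_apply, hu, hv, if_true, if_false, true_or,
      or_true, or_self] <;> field_simp
  · linear_combination (l - m) ^ 2 * hsum
  all_goals ring

theorem loopedStarAdj_sub_smul_one_abs_apply_center {a : ℕ} (hcard : Fintype.card ι = a + 1)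
    (ha : 0 < a) {μ : ℝ} (hμ₀ : 0 ≤ μ) (hμ₁ : μ ≤ 1) {B : Matrix ι ι ℝ} (hB : B.PosSemidef)
    (hBsq : B ^ 2 = (loopedStarAdj c - μ • 1) ^ 2) :
    B c c = (2 * a + 1 - μ) / √(4 * a + 1) := by
  have ha' : (1 : ℝ) ≤ a := by exact_mod_cast ha
  set s := √(4 * (a : ℝ) + 1)
  have hs2 : s ^ 2 = 4 * a + 1 := Real.sq_sqrt (by positivity)
  have hs : 2 < s := by nlinarith [Real.sqrt_nonneg (4 * (a : ℝ) + 1)]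
  set l := (1 + s) / 2 with hl
  set m := (1 - s) / 2 with hm
  have hcard' : (Fintype.card ι : ℝ) = a + 1 := by exact_mod_cast hcard
  have hprod : l * m = 1 - Fintype.card ι := by rw [hcard']; linear_combination -hs2 / 4
  have hdot : ∀ x y, loopedStarEigenvec c x ⬝ᵥ loopedStarEigenvec c y = x * y + a := by
    intro x y; rw [loopedStarEigenvec_dotProduct, hcard']; ring
  have hnorm : ∀ x, loopedStarEigenvec c x ⬝ᵥ loopedStarEigenvec c x ≠ 0 := fun x =>
    ne_of_gt (by rw [hdot]; nlinarith [mul_self_nonneg x])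
  set P := rankOneProj (loopedStarEigenvec c l)
  set Q := rankOneProj (loopedStarEigenvec c m)
  have hP : IsStarProjection P := isStarProjection_rankOneProj (hnorm _)
  have hQ : IsStarProjection Q := isStarProjection_rankOneProj (hnorm _)
  have hPQ : P * Q = 0 :=
    rankOneProj_mul_rankOneProj_of_dotProduct_eq_zero (by rw [hdot]; linarith)
  have hA : loopedStarAdj c - μ • 1 = (l - μ) • P + (m - μ) • Q + (-μ) • (1 - P - Q) := by
    rw [loopedStarAdj_eq (by omega) (by ring) hprod]
    module
  have hBC := hP.eq_abs_smul_add_smul_add_smul_one_sub hQ hPQ (nonneg_iff_posSemidef.mpr hB)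
    (hBsq.trans (by rw [hA]))
  rw [hBC, abs_of_nonneg (by linarith), abs_of_nonpos (by linarith), abs_neg, abs_of_nonneg hμ₀]
  simp only [Matrix.add_apply, Matrix.sub_apply, Matrix.smul_apply, smul_eq_mul, one_apply_eq,
    P, Q, rankOneProj_apply, hdot, loopedStarEigenvec, if_true]
  have hl' : l * l + a = l * s := by rw [hl]; linear_combination -hs2 / 4
  have hm' : m * m + a = -(m * s) := by rw [hm]; linear_combination -hs2 / 4
  have hl0 : l ≠ 0 := by positivity
  have hm0 : m ≠ 0 := by linarith
  have hs0 : s ≠ 0 := by positivity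
  rw [hl', hm']
  field_simp
  rw [hl, hm]
  linear_combination hs2 / 2

end LoopedStar

theorem Nat.coprime_iff_eq_one_or_eq_one_of_dvd_prime_pow {p a u v : ℕ} (hp : p.Prime)
    (hu : u ∣ p ^ a) (hv : v ∣ p ^ a) : u.Coprime v ↔ u = 1 ∨ v = 1 := by
  obtain ⟨i, -, rfl⟩ := (Nat.dvd_prime_pow hp).mp hu
  obtain ⟨j, -, rfl⟩ := (Nat.dvd_prime_pow hp).mp hv
  refine ⟨fun h => ?_, ?_⟩
  · rcases le_total i j with hij | hji
    · exact .inl (h.eq_one_of_dvd (pow_dvd_pow p hij))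
    · exact .inr (h.symm.eq_one_of_dvd (pow_dvd_pow p hji))
  · rintro (h | h) <;> simp [h]

/-- The vertex energy of the vertex `1` in the modified divisor prime graph of `p ^ a`:
if `B` is a positive semidefinite matrix with `B² = (A - μI)²`, `μ = 1/(a+1)`, then the
diagonal entry of `B` at the vertex `1` equals `(2a² + 3a) / ((a+1)√(4a+1))`. -/
theorem vertexEnergy_one_modifiedDivisorPrimeGraph_primePow (p a : ℕ) (hp : p.Prime)
    (ha : 0 < a)
    (A B : Matrix {d : ℕ // d ∈ (p ^ a).divisors} {d : ℕ // d ∈ (p ^ a).divisors} ℝ)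
    (hA : ∀ u v : {d : ℕ // d ∈ (p ^ a).divisors},
      A u v = if Nat.gcd u.1 v.1 = 1 then 1 else 0)
    (hB : B.PosSemidef)
    (hBsq : B ^ 2 = (A - (1 / ((a : ℝ) + 1)) • 1) ^ 2) :
    B ⟨1, Nat.one_mem_divisors.mpr (pow_ne_zero a hp.ne_zero)⟩
        ⟨1, Nat.one_mem_divisors.mpr (pow_ne_zero a hp.ne_zero)⟩ =
      (2 * (a : ℝ) ^ 2 + 3 * (a : ℝ)) /
        (((a : ℝ) + 1) * Real.sqrt (4 * (a : ℝ) + 1)) := by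
  have hcard : Fintype.card {d : ℕ // d ∈ (p ^ a).divisors} = a + 1 := by
    simp [Nat.divisors_prime_pow hp]
  have hA' : A = loopedStarAdj ⟨1, Nat.one_mem_divisors.mpr (pow_ne_zero a hp.ne_zero)⟩ := by
    ext u v
    have hcop := Nat.coprime_iff_eq_one_or_eq_one_of_dvd_prime_pow hp
      (Nat.dvd_of_mem_divisors u.2) (Nat.dvd_of_mem_divisors v.2)
    rw [Nat.Coprime] at hcop
    simp [hA, loopedStarAdj, hcop, Subtype.ext_iff]
  subst hA'
  rw [loopedStarAdj_sub_smul_one_abs_apply_center hcard ha (by positivity)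
    (div_le_one_of_le₀ (by linarith) (by positivity)) hB hBsq]
  field_simp
  ring
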